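/- Let f₀ ∈ L² ∩ L^∞ be a probability density and let X₁, …, Xₙ (n > 1) be i.i.d. with density f₀. With R(u,v) = K_h(u − v) and π₂ the second Hoeffding projection, the degenerate part S₂ = Uₙ^{(2)}(π₂R) of the Hoeffding decomposition of Tₙ(h) satisfies E S₂² ≤ 2 ‖f₀‖₂² ‖K‖₂² / ( n(n−1) h ) for every h > 0. -/

import Mathlib

open MeasureTheory ProbabilityTheory Real Filter
open scoped ENNReal NNReal BigOperators Topology

noncomputable section

/-- The Fourier transform `Fφ(u) = ∫ e^{-ixu} φ(x) dx`. -/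
def FT (φ : ℝ → ℝ) (u : ℝ) : ℂ :=
  ∫ x : ℝ, Complex.exp (-(Complex.I * x * u)) * (φ x)

/-- The Sobolev norm `‖φ‖_{2,α} = ‖Fφ(·)(1+|·|²)^{α/2}‖₂`. -/
def sobNorm (α : ℝ) (φ : ℝ → ℝ) : ℝ :=
  (∫ u : ℝ, ‖FT φ u‖ ^ 2 * (1 + u ^ 2) ^ α) ^ ((1 : ℝ) / 2)

/-- Membership in the Sobolev space `H₂^α` (as a subset of `L²`). -/
def MemSobolev (α : ℝ) (φ : ℝ → ℝ) : Prop :=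
  MemLp φ 2 volume ∧ Integrable (fun u : ℝ => ‖FT φ u‖ ^ 2 * (1 + u ^ 2) ^ α)

/-- `K_h(x) = h⁻¹ K(x/h)`. -/
def Kh (K : ℝ → ℝ) (h x : ℝ) : ℝ := h⁻¹ * K (x / h)

/-- The estimator `Tₙ(h) = (2/(n(n−1))) Σ_{i<j} K_h(Xᵢ − Xⱼ)`. -/
def Tn {Ω : Type*} (K : ℝ → ℝ) (h : ℝ) (n : ℕ) (X : ℕ → Ω → ℝ) (ω : Ω) : ℝ :=
  (2 / ((n : ℝ) * ((n : ℝ) - 1))) *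
    ∑ i ∈ Finset.range n, ∑ j ∈ Finset.Ico (i + 1) n, Kh K h (X i ω - X j ω)

/-- The measure on `ℝ` with Lebesgue density `f₀`. -/
def densMeasure (f₀ : ℝ → ℝ) : Measure ℝ :=
  volume.withDensity (fun x => ENNReal.ofReal (f₀ x))

/-- `f₀` is a probability density. -/
def IsDensity (f₀ : ℝ → ℝ) : Prop :=
  Measurable f₀ ∧ (∀ x, 0 ≤ f₀ x) ∧ ∫ x, f₀ x = 1

/-- Convolution `(f ∗ g)(x) = ∫ f(x − y) g(y) dy`. -/
def conv (f g : ℝ → ℝ) (x : ℝ) : ℝ := ∫ y, f (x - y) * g y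

/-- The essential supremum norm `‖f‖_∞`. -/
def supNormEss (f : ℝ → ℝ) : ℝ := (eLpNorm f ⊤ volume).toReal

/-- First Hoeffding projection `π₁R(x) = E R(x, X₁) − E R(X₁, X₂)`
(expectations under the density `f₀`). -/
def pi1 (f₀ : ℝ → ℝ) (R : ℝ → ℝ → ℝ) (x : ℝ) : ℝ :=
  (∫ z, R x z * f₀ z) - ∫ w, (∫ z, R w z * f₀ z) * f₀ w

/-- Second Hoeffding projection
`π₂R(x,y) = R(x,y) − E R(x, X₁) − E R(y, X₁) + E R(X₁, X₂)`. -/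
def pi2 (f₀ : ℝ → ℝ) (R : ℝ → ℝ → ℝ) (x y : ℝ) : ℝ :=
  R x y - (∫ z, R x z * f₀ z) - (∫ z, R y z * f₀ z) +
    ∫ w, (∫ z, R w z * f₀ z) * f₀ w

/-- The U-statistic `Uₙ⁽²⁾(R) = (2/(n(n−1))) Σ_{i<j} R(Xᵢ, Xⱼ)`. -/
def U2 {Ω : Type*} (R : ℝ → ℝ → ℝ) (n : ℕ) (X : ℕ → Ω → ℝ) (ω : Ω) : ℝ :=
  (2 / ((n : ℝ) * ((n : ℝ) - 1))) *
    ∑ i ∈ Finset.range n, ∑ j ∈ Finset.Ico (i + 1) n, R (X i ω) (X j ω)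

/-- The estimator `T̄ₙ(h) = (2/(n(n−1))) Σ_{i<j} ∫ K_h(x − Xᵢ)K_h(x − Xⱼ) dx`. -/
def Tbar {Ω : Type*} (K : ℝ → ℝ) (h : ℝ) (n : ℕ) (X : ℕ → Ω → ℝ) (ω : Ω) : ℝ :=
  (2 / ((n : ℝ) * ((n : ℝ) - 1))) *
    ∑ i ∈ Finset.range n, ∑ j ∈ Finset.Ico (i + 1) n,
      ∫ x, Kh K h (x - X i ω) * Kh K h (x - X j ω)

/-! Write `q = π₂R`. It is symmetric and degenerate (`∫ q(x, z) f₀(z) dz = 0`), so for two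
different pairs `i < j`, `k < l` the product `q(Xᵢ, Xⱼ) q(Xₖ, Xₗ)` has mean zero: an index occurring
only once can be integrated out first. Hence `E S₂² = 2 E q(X₁, X₂)² / (n(n-1))`. Next, `π₂` is the
composition of the centerings in each variable, and centering does not increase second moments
(variance ≤ second moment), so `E q(X₁, X₂)² ≤ E R(X₁, X₂)² = ∬ f₀(x) f₀(y) K_h(x - y)² dx dy`.
Finally `2 f₀(x) f₀(y) ≤ f₀(x)² + f₀(y)²` and translation invariance bound this by
`‖f₀‖₂² ‖K_h‖₂² = ‖f₀‖₂² ‖K‖₂² / h`. -/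

open Finset Function

lemma integrable_of_abs_le {α : Type*} [MeasurableSpace α] {μ : Measure α} [IsFiniteMeasure μ]
    {f : α → ℝ} {C : ℝ} (hf : Measurable f) (hfC : ∀ x, |f x| ≤ C) : Integrable f μ :=
  .of_bound hf.aestronglyMeasurable C (ae_of_all _ hfC)

lemma abs_mul_le_sq_of_abs_le {β : Type*} {q : β → β → ℝ} {C : ℝ}
    (hqC : ∀ x y, |q x y| ≤ C) (a b c d : β) :
    |q a b * q c d| ≤ C ^ 2 := by
  rw [abs_mul, sq]
  exact mul_le_mul (hqC a b) (hqC c d) (abs_nonneg _) ((abs_nonneg _).trans (hqC a b))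

section Centering

variable {α β : Type*} [MeasurableSpace α] [MeasurableSpace β]
  {μ : Measure α} {ν : Measure β} [IsProbabilityMeasure μ] [IsProbabilityMeasure ν]

lemma abs_integral_le_of_abs_le {f : α → ℝ} {C : ℝ} (hf : ∀ x, |f x| ≤ C) :
    |∫ x, f x ∂μ| ≤ C := by
  simpa using norm_integral_le_of_norm_le_const (μ := μ) (f := f) (ae_of_all _ hf)

lemma measurable_integral_right {F : α → β → ℝ} (hF : Measurable (uncurry F)) :
    Measurable fun x => ∫ y, F x y ∂ν :=
  hF.stronglyMeasurable.integral_prod_right'.measurable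

lemma integral_sq_sub_integral_right_le {F : α → β → ℝ} (hF : Measurable (uncurry F))
    (hF2 : Integrable (fun p : α × β => F p.1 p.2 ^ 2) (μ.prod ν)) :
    ∫ p : α × β, (F p.1 p.2 - ∫ y, F p.1 y ∂ν) ^ 2 ∂(μ.prod ν)
      ≤ ∫ p : α × β, F p.1 p.2 ^ 2 ∂(μ.prod ν) := by
  by_cases hint : Integrable (fun p : α × β => (F p.1 p.2 - ∫ y, F p.1 y ∂ν) ^ 2) (μ.prod ν)
  · rw [integral_prod _ hint, integral_prod _ hF2]
    refine integral_mono_of_nonneg (ae_of_all _ fun x => integral_nonneg fun _ => sq_nonneg _)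
      hF2.integral_prod_left (ae_of_all _ fun x => ?_)
    have hFx : AEStronglyMeasurable (F x) ν := (hF.comp measurable_prodMk_left).aestronglyMeasurable
    simpa only [← variance_eq_integral hFx.aemeasurable, Pi.pow_apply]
      using variance_le_expectation_sq hFx
  · rw [integral_undef hint]
    exact integral_nonneg fun _ => sq_nonneg _

lemma integral_sq_sub_integral_left_le {F : α → β → ℝ} (hF : Measurable (uncurry F))
    (hF2 : Integrable (fun p : α × β => F p.1 p.2 ^ 2) (μ.prod ν)) :
    ∫ p : α × β, (F p.1 p.2 - ∫ x, F x p.2 ∂μ) ^ 2 ∂(μ.prod ν)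
      ≤ ∫ p : α × β, F p.1 p.2 ^ 2 ∂(μ.prod ν) := by
  have hswap := integral_sq_sub_integral_right_le (μ := ν) (ν := μ) (F := flip F)
    (hF.comp measurable_swap) hF2.swap
  rw [← integral_prod_swap, ← integral_prod_swap (fun p : α × β => F p.1 p.2 ^ 2)]
  exact hswap

end Centering

section HoeffdingProjection

variable {α : Type*} [MeasurableSpace α]

def hoeffdingProj₂ (μ : Measure α) (R : α → α → ℝ) (x y : α) : ℝ :=
  R x y - ∫ z, R x z ∂μ - ∫ z, R y z ∂μ + ∫ w, ∫ z, R w z ∂μ ∂μ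

variable {μ : Measure α} {R : α → α → ℝ} {C : ℝ}

lemma hoeffdingProj₂_comm (hRs : ∀ x y, R x y = R y x) (x y : α) :
    hoeffdingProj₂ μ R x y = hoeffdingProj₂ μ R y x := by
  simp only [hoeffdingProj₂, hRs x y]
  ring

variable [IsProbabilityMeasure μ]

lemma measurable_hoeffdingProj₂ (hR : Measurable (uncurry R)) :
    Measurable (uncurry (hoeffdingProj₂ μ R)) := by
  have hg := measurable_integral_right (ν := μ) hR
  exact ((hR.sub (hg.comp measurable_fst)).sub (hg.comp measurable_snd)).add measurable_const

lemma abs_hoeffdingProj₂_le (hRC : ∀ x y, |R x y| ≤ C) (x y : α) :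
    |hoeffdingProj₂ μ R x y| ≤ 4 * C := by
  have hg : ∀ x, |∫ z, R x z ∂μ| ≤ C := fun x => abs_integral_le_of_abs_le (hRC x)
  have hc := abs_integral_le_of_abs_le (μ := μ) hg
  have hxy := hRC x y
  have hx := hg x
  have hy := hg y
  simp only [hoeffdingProj₂, abs_le] at *
  constructor <;> linarith

lemma integral_hoeffdingProj₂_right (hR : Measurable (uncurry R)) (hRC : ∀ x y, |R x y| ≤ C)
    (x : α) : ∫ z, hoeffdingProj₂ μ R x z ∂μ = 0 := by
  have hRx : Integrable (R x) μ := integrable_of_abs_le (hR.comp measurable_prodMk_left) (hRC x)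
  have hg : Integrable (fun z => ∫ w, R z w ∂μ) μ :=
    integrable_of_abs_le (measurable_integral_right hR) fun z => abs_integral_le_of_abs_le (hRC z)
  simp only [hoeffdingProj₂]
  rw [integral_add, integral_sub, integral_sub]
  · simp
  all_goals fun_prop

lemma hoeffdingProj₂_eq_sub_integral_left (hR : Measurable (uncurry R))
    (hRC : ∀ x y, |R x y| ≤ C) (hRs : ∀ x y, R x y = R y x) (x y : α) :
    hoeffdingProj₂ μ R x y
      = (R x y - ∫ z, R x z ∂μ) - ∫ w, (R w y - ∫ z, R w z ∂μ) ∂μ := by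
  have hRy : Integrable (fun w => R w y) μ :=
    integrable_of_abs_le (hR.comp measurable_prodMk_right) (hRC · y)
  have hg : Integrable (fun w => ∫ z, R w z ∂μ) μ :=
    integrable_of_abs_le (measurable_integral_right hR) fun w => abs_integral_le_of_abs_le (hRC w)
  rw [integral_sub hRy hg, hoeffdingProj₂]
  simp only [hRs _ y]
  ring

lemma integral_hoeffdingProj₂_sq_le (hR : Measurable (uncurry R)) (hRC : ∀ x y, |R x y| ≤ C)
    (hRs : ∀ x y, R x y = R y x) :
    ∫ p : α × α, hoeffdingProj₂ μ R p.1 p.2 ^ 2 ∂(μ.prod μ)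
      ≤ ∫ p : α × α, R p.1 p.2 ^ 2 ∂(μ.prod μ) := by
  set R₁ : α → α → ℝ := fun x y => R x y - ∫ z, R x z ∂μ
  have hR₁ : Measurable (uncurry R₁) :=
    hR.sub ((measurable_integral_right hR).comp measurable_fst)
  have hsq {F : α → α → ℝ} {D : ℝ} (hF : Measurable (uncurry F)) (hFD : ∀ x y, |F x y| ≤ D) :
      Integrable (fun p : α × α => F p.1 p.2 ^ 2) (μ.prod μ) :=
    integrable_of_abs_le (hF.pow_const 2) fun p => by
      rw [abs_pow]; exact pow_le_pow_left₀ (abs_nonneg _) (hFD p.1 p.2) 2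
  have hR₁C : ∀ x y, |R₁ x y| ≤ 2 * C := fun x y => by
    have := abs_integral_le_of_abs_le (μ := μ) (hRC x)
    have := hRC x y
    simp only [R₁, abs_le] at *
    constructor <;> linarith
  calc ∫ p : α × α, hoeffdingProj₂ μ R p.1 p.2 ^ 2 ∂(μ.prod μ)
      = ∫ p : α × α, (R₁ p.1 p.2 - ∫ w, R₁ w p.2 ∂μ) ^ 2 ∂(μ.prod μ) := by
        simp only [hoeffdingProj₂_eq_sub_integral_left hR hRC hRs, R₁]
    _ ≤ ∫ p : α × α, R₁ p.1 p.2 ^ 2 ∂(μ.prod μ) :=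
        integral_sq_sub_integral_left_le hR₁ (hsq hR₁ hR₁C)
    _ ≤ ∫ p : α × α, R p.1 p.2 ^ 2 ∂(μ.prod μ) :=
        integral_sq_sub_integral_right_le hR (hsq hR hRC)

end HoeffdingProjection

section UStatistic

variable {Ω β : Type*} [MeasurableSpace Ω] [MeasurableSpace β] {P : Measure Ω}
  {X : ℕ → Ω → β} {μ : Measure β} {q : β → β → ℝ} {C : ℝ}

lemma indepFun_triple_of_ne (hX : ∀ i, Measurable (X i)) (hind : iIndepFun X P) {i j k m : ℕ}
    (hmi : m ≠ i) (hmj : m ≠ j) (hmk : m ≠ k) :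
    IndepFun (fun ω => ((X i ω, X j ω), X k ω)) (X m) P := by
  have hdisj : Disjoint ({i, j, k} : Finset ℕ) {m} := by
    simp [hmi, hmj, hmk]
  have hφ : Measurable fun v : ({i, j, k} : Finset ℕ) → β =>
      ((v ⟨i, by simp⟩, v ⟨j, by simp⟩), v ⟨k, by simp⟩) := by fun_prop
  have hψ : Measurable fun v : ({m} : Finset ℕ) → β => v ⟨m, mem_singleton_self m⟩ := by
    fun_prop
  exact (hind.indepFun_finset _ _ hdisj hX).comp hφ hψ

variable [IsProbabilityMeasure P]

lemma map_pair_eq_prod (hX : ∀ i, Measurable (X i)) (hind : iIndepFun X P)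
    (hlaw : ∀ i, P.map (X i) = μ) {i j : ℕ} (hij : i ≠ j) :
    P.map (fun ω => (X i ω, X j ω)) = μ.prod μ := by
  rw [(indepFun_iff_map_prod_eq_prod_map_map (hX i).aemeasurable (hX j).aemeasurable).1
    (hind.indepFun hij), hlaw, hlaw]

lemma integral_comp_pair (hX : ∀ i, Measurable (X i)) (hind : iIndepFun X P)
    (hlaw : ∀ i, P.map (X i) = μ) {i j : ℕ} (hij : i ≠ j) {φ : β × β → ℝ} (hφ : Measurable φ) :
    ∫ ω, φ (X i ω, X j ω) ∂P = ∫ p, φ p ∂(μ.prod μ) := by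
  rw [← map_pair_eq_prod hX hind hlaw hij,
    integral_map ((hX i).prodMk (hX j)).aemeasurable hφ.aestronglyMeasurable]

variable [IsProbabilityMeasure μ]

lemma integral_mul_eq_zero_of_degenerate (hX : ∀ i, Measurable (X i)) (hind : iIndepFun X P)
    (hlaw : ∀ i, P.map (X i) = μ) (hq : Measurable (uncurry q)) (hqC : ∀ x y, |q x y| ≤ C)
    (hdeg : ∀ x, ∫ z, q x z ∂μ = 0) {i j k m : ℕ} (hmi : m ≠ i) (hmj : m ≠ j) (hmk : m ≠ k) :
    ∫ ω, q (X i ω) (X j ω) * q (X k ω) (X m ω) ∂P = 0 := by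
  set V : Ω → (β × β) × β := fun ω => ((X i ω, X j ω), X k ω)
  have hV : Measurable V := ((hX i).prodMk (hX j)).prodMk (hX k)
  have hmap : P.map (fun ω => (V ω, X m ω)) = (P.map V).prod μ := by
    rw [← hlaw m]
    exact (indepFun_iff_map_prod_eq_prod_map_map hV.aemeasurable (hX m).aemeasurable).1
      (indepFun_triple_of_ne hX hind hmi hmj hmk)
  set F : ((β × β) × β) × β → ℝ := fun p => q p.1.1.1 p.1.1.2 * q p.1.2 p.2
  have hF : Measurable F := (hq.comp (measurable_fst.fst.fst.prodMk measurable_fst.fst.snd)).mul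
    (hq.comp (measurable_fst.snd.prodMk measurable_snd))
  have hFint : Integrable F ((P.map V).prod μ) :=
    integrable_of_abs_le hF fun _ => abs_mul_le_sq_of_abs_le hqC _ _ _ _
  calc ∫ ω, q (X i ω) (X j ω) * q (X k ω) (X m ω) ∂P
      = ∫ p, F p ∂(P.map (fun ω => (V ω, X m ω))) :=
        (integral_map (hV.prodMk (hX m)).aemeasurable hF.aestronglyMeasurable).symm
    _ = ∫ v, ∫ z, F (v, z) ∂μ ∂(P.map V) := by rw [hmap, integral_prod _ hFint]
    _ = 0 := by simp [F, integral_const_mul, hdeg]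

end UStatistic

def ltPairs (n : ℕ) : Finset (ℕ × ℕ) := {p ∈ range n ×ˢ range n | p.1 < p.2}

lemma sum_ltPairs {M : Type*} [AddCommMonoid M] (n : ℕ) (f : ℕ → ℕ → M) :
    ∑ p ∈ ltPairs n, f p.1 p.2 = ∑ i ∈ range n, ∑ j ∈ Ico (i + 1) n, f i j := by
  rw [ltPairs, sum_filter, sum_product]
  refine sum_congr rfl fun i _ => ?_
  rw [← sum_filter]
  congr 1
  ext j
  simp only [mem_filter, mem_range, mem_Ico]
  omega

lemma card_ltPairs (n : ℕ) : #(ltPairs n) = n.choose 2 := by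
  rw [card_eq_sum_ones, sum_ltPairs n fun _ _ => 1, Nat.choose_two_right, ← sum_range_id,
    ← sum_range_reflect]
  simp only [sum_const, Nat.card_Ico, smul_eq_mul, mul_one]
  exact sum_congr rfl fun i hi => by rw [mem_range] at hi; omega

section UStatisticVariance

variable {Ω : Type*} [MeasurableSpace Ω] {P : Measure Ω} [IsProbabilityMeasure P]
  {X : ℕ → Ω → ℝ} {μ : Measure ℝ} [IsProbabilityMeasure μ] {q : ℝ → ℝ → ℝ} {C : ℝ}

lemma integral_mul_of_mem_ltPairs (hX : ∀ i, Measurable (X i)) (hind : iIndepFun X P)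
    (hlaw : ∀ i, P.map (X i) = μ) (hq : Measurable (uncurry q)) (hqC : ∀ x y, |q x y| ≤ C)
    (hqs : ∀ x y, q x y = q y x) (hdeg : ∀ x, ∫ z, q x z ∂μ = 0) {n : ℕ} {p r : ℕ × ℕ}
    (hp : p ∈ ltPairs n) (hr : r ∈ ltPairs n) :
    ∫ ω, q (X p.1 ω) (X p.2 ω) * q (X r.1 ω) (X r.2 ω) ∂P
      = if p = r then ∫ z, q z.1 z.2 ^ 2 ∂(μ.prod μ) else 0 := by
  have hp' := (mem_filter.1 hp).2
  have hr' := (mem_filter.1 hr).2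
  split_ifs with hpr
  · subst hpr
    simp only [← sq]
    exact integral_comp_pair hX hind hlaw hp'.ne (φ := fun z => q z.1 z.2 ^ 2) (hq.pow_const 2)
  · have hpr' : r.1 ≠ p.1 ∨ r.2 ≠ p.2 := by
      by_contra! h
      exact hpr (Prod.ext h.1 h.2).symm
    -- one of `r.1`, `r.2` differs from the three other indices: integrate it out first
    by_cases h2 : r.2 ≠ p.1 ∧ r.2 ≠ p.2
    · exact integral_mul_eq_zero_of_degenerate hX hind hlaw hq hqC hdeg h2.1 h2.2 hr'.ne'
    · simp only [hqs (X r.1 _)]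
      exact integral_mul_eq_zero_of_degenerate hX hind hlaw hq hqC hdeg
        (by omega) (by omega) hr'.ne

theorem integral_U2_sq_of_degenerate (hX : ∀ i, Measurable (X i)) (hind : iIndepFun X P)
    (hlaw : ∀ i, P.map (X i) = μ) (hq : Measurable (uncurry q)) (hqC : ∀ x y, |q x y| ≤ C)
    (hqs : ∀ x y, q x y = q y x) (hdeg : ∀ x, ∫ z, q x z ∂μ = 0) (n : ℕ) :
    ∫ ω, U2 q n X ω ^ 2 ∂P = 2 / (n * (n - 1)) * ∫ z, q z.1 z.2 ^ 2 ∂(μ.prod μ) := by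
  set V := ∫ z, q z.1 z.2 ^ 2 ∂(μ.prod μ)
  set Y : ℕ × ℕ → Ω → ℝ := fun p ω => q (X p.1 ω) (X p.2 ω)
  have hY : ∀ p r, Integrable (fun ω => Y p ω * Y r ω) P := fun p r =>
    integrable_of_abs_le
      ((hq.comp ((hX p.1).prodMk (hX p.2))).mul (hq.comp ((hX r.1).prodMk (hX r.2))))
      fun _ => abs_mul_le_sq_of_abs_le hqC _ _ _ _
  have hU2 : ∀ ω, U2 q n X ω ^ 2
      = (2 / (n * (n - 1))) ^ 2 * ∑ p ∈ ltPairs n, ∑ r ∈ ltPairs n, Y p ω * Y r ω := by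
    intro ω
    rw [U2, ← sum_ltPairs, mul_pow, sq (∑ p ∈ ltPairs n, _), sum_mul_sum]
  calc ∫ ω, U2 q n X ω ^ 2 ∂P
      = (2 / (n * (n - 1))) ^ 2 * ∑ p ∈ ltPairs n, ∑ r ∈ ltPairs n, ∫ ω, Y p ω * Y r ω ∂P := by
        simp_rw [hU2, integral_const_mul]
        rw [integral_finsetSum _ fun p _ => integrable_finsetSum _ fun r _ => hY p r]
        simp_rw [integral_finsetSum _ fun r _ => hY _ r]
    _ = (2 / (n * (n - 1))) ^ 2 * (#(ltPairs n) * V) := by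
        rw [sum_congr rfl fun p hp => sum_congr rfl fun r hr =>
          integral_mul_of_mem_ltPairs hX hind hlaw hq hqC hqs hdeg hp hr]
        simp [sum_ite_eq, V]
    _ = 2 / (n * (n - 1)) * V := by
        rw [card_ltPairs, Nat.cast_choose_two]
        rcases eq_or_ne ((n : ℝ) * (n - 1)) 0 with hN | hN
        · simp [hN]
        · field_simp

end UStatisticVariance

section DensityMeasure

variable {f : ℝ → ℝ}

lemma isProbabilityMeasure_densMeasure (hf : IsDensity f) :
    IsProbabilityMeasure (densMeasure f) := by
  obtain ⟨-, hf0, hf1⟩ := hf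
  have hfi : Integrable f := by
    by_contra h
    rw [integral_undef h] at hf1
    exact zero_ne_one hf1
  constructor
  rw [densMeasure, withDensity_apply _ MeasurableSet.univ, setLIntegral_univ,
    ← ofReal_integral_eq_lintegral_ofReal hfi (ae_of_all _ hf0), hf1, ENNReal.ofReal_one]

lemma integral_densMeasure (hf : Measurable f) (hf0 : ∀ x, 0 ≤ f x) (φ : ℝ → ℝ) :
    ∫ x, φ x ∂densMeasure f = ∫ x, φ x * f x := by
  rw [densMeasure, integral_withDensity_eq_integral_toReal_smul hf.ennreal_ofReal
    (ae_of_all _ fun _ => ENNReal.ofReal_lt_top)]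
  simp [ENNReal.toReal_ofReal (hf0 _), mul_comm]

lemma integral_prod_densMeasure (hf : Measurable f) (hf0 : ∀ x, 0 ≤ f x) (φ : ℝ × ℝ → ℝ) :
    ∫ z, φ z ∂(densMeasure f).prod (densMeasure f)
      = ∫ z, f z.1 * f z.2 * φ z ∂(volume.prod volume) := by
  rw [densMeasure, prod_withDensity hf.ennreal_ofReal hf.ennreal_ofReal,
    integral_withDensity_eq_integral_toReal_smul (by fun_prop)
      (ae_of_all _ fun _ => ENNReal.mul_lt_top ENNReal.ofReal_lt_top ENNReal.ofReal_lt_top)]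
  simp [ENNReal.toReal_ofReal (hf0 _)]

lemma pi2_eq_hoeffdingProj₂ (hf : Measurable f) (hf0 : ∀ x, 0 ≤ f x) (R : ℝ → ℝ → ℝ) :
    pi2 f R = hoeffdingProj₂ (densMeasure f) R := by
  ext x y
  simp only [pi2, hoeffdingProj₂, integral_densMeasure hf hf0]

end DensityMeasure

lemma integral_mul_mul_sq_sub_le {f k : ℝ → ℝ} (hf : Integrable (fun x => f x ^ 2))
    (hk : Integrable (fun x => k x ^ 2)) :
    ∫ z, f z.1 * f z.2 * k (z.1 - z.2) ^ 2 ∂(volume.prod volume)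
      ≤ (∫ x, f x ^ 2) * ∫ x, k x ^ 2 := by
  set A : ℝ × ℝ → ℝ := fun z => f z.1 ^ 2 * k (z.1 - z.2) ^ 2
  set B : ℝ × ℝ → ℝ := fun z => f z.2 ^ 2 * k (z.1 - z.2) ^ 2
  have hA : Integrable A (volume.prod volume) := by
    simpa [Function.comp_def, A, neg_sub] using
      (measurePreserving_prod_sub volume volume).integrable_comp_of_integrable
        (hf.mul_prod hk.comp_neg)
  have hB : Integrable B (volume.prod volume) := by
    simpa [Function.comp_def, B, mul_comm] using
      (measurePreserving_sub_prod volume volume).integrable_comp_of_integrable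
        (hk.mul_prod hf)
  have hIA : ∫ z, A z ∂(volume.prod volume) = (∫ x, f x ^ 2) * ∫ x, k x ^ 2 := by
    simp only [integral_prod _ hA, A, integral_const_mul,
      integral_sub_left_eq_self (fun t => k t ^ 2), integral_mul_const]
  have hIB : ∫ z, B z ∂(volume.prod volume) = (∫ x, f x ^ 2) * ∫ x, k x ^ 2 := by
    simp only [integral_prod_symm _ hB, B, integral_const_mul,
      integral_sub_right_eq_self (fun t => k t ^ 2), integral_mul_const]
  by_cases hint : Integrable (fun z : ℝ × ℝ => f z.1 * f z.2 * k (z.1 - z.2) ^ 2)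
    (volume.prod volume)
  · calc ∫ z, f z.1 * f z.2 * k (z.1 - z.2) ^ 2 ∂(volume.prod volume)
        ≤ ∫ z, (A z + B z) / 2 ∂(volume.prod volume) :=
          integral_mono hint ((hA.add hB).div_const 2) fun z => by
            nlinarith [mul_nonneg (sq_nonneg (f z.1 - f z.2)) (sq_nonneg (k (z.1 - z.2)))]
      _ = (∫ x, f x ^ 2) * ∫ x, k x ^ 2 := by
          rw [integral_div, integral_add hA hB, hIA, hIB]
          ring
  · rw [integral_undef hint]
    exact mul_nonneg (integral_nonneg fun _ => sq_nonneg _) (integral_nonneg fun _ => sq_nonneg _)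

section ScaledKernel

variable {K : ℝ → ℝ} {h : ℝ}

lemma measurable_Kh (hK : Measurable K) : Measurable (Kh K h) :=
  measurable_const.mul (hK.comp (measurable_id.div_const h))

lemma abs_Kh_le (hh : 0 < h) {B : ℝ} (hKB : ∀ x, |K x| ≤ B) (x : ℝ) : |Kh K h x| ≤ h⁻¹ * B := by
  rw [Kh, abs_mul, abs_inv, abs_of_pos hh]
  exact mul_le_mul_of_nonneg_left (hKB _) (inv_nonneg.2 hh.le)

lemma Kh_neg (hK : ∀ x, K (-x) = K x) (x : ℝ) : Kh K h (-x) = Kh K h x := by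
  rw [Kh, Kh, neg_div, hK]

lemma integral_Kh_sq (hh : 0 < h) : ∫ x, Kh K h x ^ 2 = h⁻¹ * ∫ x, K x ^ 2 := by
  simp only [Kh, mul_pow, integral_const_mul]
  rw [Measure.integral_comp_div (fun x => K x ^ 2) h, abs_of_pos hh, smul_eq_mul]
  field_simp

lemma integrable_Kh_sq (hK : Integrable (fun x => K x ^ 2)) (hh : h ≠ 0) :
    Integrable (fun x => Kh K h x ^ 2) := by
  simpa only [Kh, mul_pow] using (hK.comp_div hh).const_mul (h⁻¹ ^ 2)

end ScaledKernel

theorem degenerate_term_bound_general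
    (K : ℝ → ℝ) (hKm : Measurable K) (hKsym : ∀ x, K (-x) = K x)
    (hKbd : ∃ B, ∀ x, |K x| ≤ B) (hKint : Integrable K)
    (f₀ : ℝ → ℝ) (hdens : IsDensity f₀) (hL2 : MemLp f₀ 2 volume)
    (Ω : Type) (_mΩ : MeasurableSpace Ω) (P : Measure Ω) (hP : IsProbabilityMeasure P)
    (X : ℕ → Ω → ℝ) (hXm : ∀ i, Measurable (X i))
    (hindep : iIndepFun X P)
    (hlaw : ∀ i, Measure.map (X i) P = densMeasure f₀)
    (n : ℕ) (h : ℝ) (hh : 0 < h) :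
    (∫ ω, (U2 (pi2 f₀ (fun u v => Kh K h (u - v))) n X ω) ^ 2 ∂P) ≤
      2 * (∫ x, (f₀ x) ^ 2) * (∫ x, (K x) ^ 2) / ((n : ℝ) * ((n : ℝ) - 1) * h) := by
  obtain ⟨B, hB⟩ := hKbd
  have := isProbabilityMeasure_densMeasure hdens
  obtain ⟨hf₀m, hf₀0, -⟩ := hdens
  set R : ℝ → ℝ → ℝ := fun u v => Kh K h (u - v)
  have hRm : Measurable (uncurry R) := (measurable_Kh hKm).comp measurable_sub
  have hRC : ∀ x y, |R x y| ≤ h⁻¹ * B := fun x y => abs_Kh_le hh hB _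
  have hRs : ∀ x y, R x y = R y x := fun x y => by
    simp only [R, ← neg_sub y x, Kh_neg hKsym]
  have hK2 : Integrable (fun x => K x ^ 2) := by
    simpa only [sq] using hKint.bdd_mul hKm.aestronglyMeasurable (ae_of_all _ hB)
  have hN : 0 ≤ 2 / ((n : ℝ) * (n - 1)) := by
    rcases n with _ | n
    · simp
    · rw [Nat.cast_succ, add_sub_cancel_right]
      positivity
  rw [pi2_eq_hoeffdingProj₂ hf₀m hf₀0, integral_U2_sq_of_degenerate hXm hindep hlaw
    (measurable_hoeffdingProj₂ hRm) (abs_hoeffdingProj₂_le hRC) (hoeffdingProj₂_comm hRs)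
    (integral_hoeffdingProj₂_right hRm hRC)]
  calc 2 / (n * (n - 1)) * ∫ z, hoeffdingProj₂ (densMeasure f₀) R z.1 z.2 ^ 2
        ∂(densMeasure f₀).prod (densMeasure f₀)
      ≤ 2 / (n * (n - 1)) * ∫ z, R z.1 z.2 ^ 2 ∂(densMeasure f₀).prod (densMeasure f₀) :=
        mul_le_mul_of_nonneg_left (integral_hoeffdingProj₂_sq_le hRm hRC hRs) hN
    _ ≤ 2 / (n * (n - 1)) * ((∫ x, f₀ x ^ 2) * ∫ t, Kh K h t ^ 2) := by
        refine mul_le_mul_of_nonneg_left ?_ hN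
        rw [integral_prod_densMeasure hf₀m hf₀0]
        exact integral_mul_mul_sq_sub_le hL2.integrable_sq (integrable_Kh_sq hK2 hh.ne')
    _ = _ := by
        simp only [integral_Kh_sq hh, div_eq_mul_inv, mul_inv]
        ring

/-- the degenerate part `S₂ = Uₙ⁽²⁾(π₂R)` of the Hoeffding
decomposition of `Tₙ(h)` (with `R(u,v) = K_h(u−v)`) satisfies
`E S₂² ≤ 2 ‖f₀‖₂² ‖K‖₂² / (n(n−1)h)`. -/
theorem degenerate_term_bound
    (K : ℝ → ℝ) (hKm : Measurable K) (hKsym : ∀ x, K (-x) = K x)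
    (hKbd : ∃ B, ∀ x, |K x| ≤ B) (hKint : Integrable K) (hK1 : (∫ x, K x) = 1)
    (hKmom : Integrable (fun x => |K x| * |x|))
    (f₀ : ℝ → ℝ) (hdens : IsDensity f₀) (hL2 : MemLp f₀ 2 volume)
    (hbdd : ∃ B, ∀ x, f₀ x ≤ B)
    (Ω : Type) (_mΩ : MeasurableSpace Ω) (P : Measure Ω) (hP : IsProbabilityMeasure P)
    (X : ℕ → Ω → ℝ) (hXm : ∀ i, Measurable (X i))
    (hindep : iIndepFun X P)
    (hlaw : ∀ i, Measure.map (X i) P = densMeasure f₀)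
    (n : ℕ) (hn : 1 < n) (h : ℝ) (hh : 0 < h) :
    (∫ ω, (U2 (pi2 f₀ (fun u v => Kh K h (u - v))) n X ω) ^ 2 ∂P) ≤
      2 * (∫ x, (f₀ x) ^ 2) * (∫ x, (K x) ^ 2) / ((n : ℝ) * ((n : ℝ) - 1) * h) :=
  degenerate_term_bound_general K hKm hKsym hKbd hKint f₀ hdens hL2 Ω _mΩ P hP X hXm hindep hlaw n h
    hh

end
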